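/- Let d ≥ 1, let z ∈ ℂ \ [0, ∞), and let R₀(z) : L²(ℝ^d) → L²(ℝ^d) be the bounded Fourier multiplier operator defined by 𝓕(R₀(z)f)(ξ) = (|ξ|² − z)^{−1} 𝓕f(ξ), where 𝓕 is the Fourier–Plancherel transform on L²(ℝ^d). Let φ₁, …, φ_N ∈ L²(ℝ^d) be an orthonormal family and P := Σ_{j=1}^N ⟨·, φ_j⟩ φ_j. Then the N × N complex matrix A(z) with entries a_{ij}(z) = δ_{ij} + ⟨R₀(z)φ_j, φ_i⟩ is invertible, and if G(z) = (g_{ij}(z)) denotes its inverse, then the bounded operator B(z)f := R₀(z)f − Σ_{i,j=1}^N g_{ij}(z) ⟨R₀(z)f, φ_j⟩ R₀(z)φ_i satisfies, for every f ∈ L²(ℝ^d): the function ξ ↦ (|ξ|² − z) 𝓕(B(z)f)(ξ) lies in L²(ℝ^d) and 𝓕^{−1}[(|ξ|² − z) 𝓕(B(z)f)] + P(B(z)f) = f; that is, B(z) is the resolvent (−Δ + P − z)^{−1} of the finite rank perturbation of the Laplacian. -/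

import Mathlib

/-!
Write `s ξ = ‖ξ‖² - z`, so that `R₀(z) = 𝓕⁻¹ s⁻¹ 𝓕`. If `A x = 0`, put `ψ = ∑ x_j φ_j` and
`u = R₀(z) ψ`; then `⟪φ_i, u⟫ = -x_i`, hence `⟪u, ψ⟫ = -∑ |x_i|² ≤ 0`, while Plancherel gives
`⟪u, ψ + z u⟫ = ∫ ‖ξ‖² |𝓕u|² ≥ 0`. Together `z ‖u‖² ≥ 0`, and since `z ∉ [0, ∞)` this forces
`u = 0`, whence `x = 0`: `A` is invertible.

With `c = A⁻¹ (⟪φ_j, R₀ f⟫)_j` we have `B f = R₀ f - ∑ c_i R₀ φ_i`, so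
`(-Δ - z) B f = f - ∑ c_i φ_i`, and `A c = (⟪φ_j, R₀ f⟫)_j` says exactly that `⟪φ_k, B f⟫ = c_k`, i.e. `P B f = ∑ c_i φ_i`.
-/

open MeasureTheory

open scoped ComplexOrder InnerProductSpace Matrix

section MultiplierGraph

variable {𝕜 E β : Type*} [RCLike 𝕜] [NormedAddCommGroup E] [InnerProductSpace 𝕜 E]
  [MeasurableSpace β] {ν : Measure β}

/-- The graph of the Fourier multiplier `𝓕⁻¹ m 𝓕`, as a relation, so that `m` need not be
bounded. -/
def multiplierGraph (𝓕 : E ≃ₗᵢ[𝕜] Lp 𝕜 2 ν) (m : β → 𝕜) : Submodule 𝕜 (E × E) where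
  carrier := {p | (𝓕 p.1 : β → 𝕜) =ᵐ[ν] fun ξ => m ξ * (𝓕 p.2 : β → 𝕜) ξ}
  zero_mem' := by
    change (𝓕 0 : β → 𝕜) =ᵐ[ν] fun ξ => m ξ * (𝓕 0 : β → 𝕜) ξ
    rw [map_zero]
    filter_upwards [Lp.coeFn_zero 𝕜 2 ν] with ξ h
    rw [h, Pi.zero_apply, mul_zero]
  add_mem' {p q} hp hq := by
    change (𝓕 (p.1 + q.1) : β → 𝕜) =ᵐ[ν] fun ξ => m ξ * (𝓕 (p.2 + q.2) : β → 𝕜) ξ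
    rw [map_add, map_add]
    filter_upwards [hp, hq, Lp.coeFn_add (𝓕 p.1) (𝓕 q.1), Lp.coeFn_add (𝓕 p.2) (𝓕 q.2)]
      with ξ hp hq h₁ h₂
    rw [h₁, h₂, Pi.add_apply, Pi.add_apply, hp, hq, mul_add]
  smul_mem' c p hp := by
    change (𝓕 (c • p.1) : β → 𝕜) =ᵐ[ν] fun ξ => m ξ * (𝓕 (c • p.2) : β → 𝕜) ξ
    rw [map_smul, map_smul]
    filter_upwards [hp, Lp.coeFn_smul c (𝓕 p.1), Lp.coeFn_smul c (𝓕 p.2)] with ξ hp h₁ h₂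
    rw [h₁, h₂, Pi.smul_apply, Pi.smul_apply, smul_eq_mul, smul_eq_mul, hp, mul_left_comm]

variable {𝓕 : E ≃ₗᵢ[𝕜] Lp 𝕜 2 ν} {m : β → 𝕜} {u v : E}

theorem mem_multiplierGraph_iff :
    (u, v) ∈ multiplierGraph 𝓕 m ↔ (𝓕 u : β → 𝕜) =ᵐ[ν] fun ξ => m ξ * (𝓕 v : β → 𝕜) ξ :=
  Iff.rfl

theorem sum_smul_mem_multiplierGraph {ι : Type*} (s : Finset ι) (c : ι → 𝕜) {u v : ι → E}
    (h : ∀ i ∈ s, (u i, v i) ∈ multiplierGraph 𝓕 m) :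
    (∑ i ∈ s, c i • u i, ∑ i ∈ s, c i • v i) ∈ multiplierGraph 𝓕 m := by
  convert Submodule.sum_mem _ fun i hi => Submodule.smul_mem _ (c i) (h i hi) using 1
  simp only [Prod.ext_iff, Prod.fst_sum, Prod.snd_sum, Prod.smul_fst, Prod.smul_snd, and_self]

theorem swap_mem_multiplierGraph_of_mem_inv (hm : ∀ ξ, m ξ ≠ 0)
    (h : (u, v) ∈ multiplierGraph 𝓕 fun ξ => (m ξ)⁻¹) : (v, u) ∈ multiplierGraph 𝓕 m := by
  rw [mem_multiplierGraph_iff] at h ⊢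
  filter_upwards [h] with ξ hξ
  rw [hξ, ← mul_assoc, mul_inv_cancel₀ (hm ξ), one_mul]

theorem add_smul_mem_multiplierGraph_add_const (h : (v, u) ∈ multiplierGraph 𝓕 m) (c : 𝕜) :
    (v + c • u, u) ∈ multiplierGraph 𝓕 fun ξ => m ξ + c := by
  rw [mem_multiplierGraph_iff, map_add, map_smul]
  filter_upwards [h, Lp.coeFn_add (𝓕 v) (c • 𝓕 u), Lp.coeFn_smul c (𝓕 u)] with ξ hv h₁ h₂
  simp only [h₁, h₂, Pi.add_apply, Pi.smul_apply, smul_eq_mul, hv]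
  ring

theorem exists_memLp_symm_toLp_eq_of_mem_multiplierGraph (h : (v, u) ∈ multiplierGraph 𝓕 m) :
    ∃ hg : MemLp (fun ξ => m ξ * (𝓕 u : β → 𝕜) ξ) 2 ν, 𝓕.symm (hg.toLp _) = v := by
  have hg := (Lp.memLp (𝓕 v)).ae_eq (mem_multiplierGraph_iff.mp h)
  refine ⟨hg, ?_⟩
  rw [← 𝓕.symm_apply_apply v]
  exact congrArg 𝓕.symm (Lp.ext (hg.coeFn_toLp.trans (mem_multiplierGraph_iff.mp h).symm))

theorem inner_eq_integral_of_mem_multiplierGraph (h : (v, u) ∈ multiplierGraph 𝓕 m) :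
    ⟪u, v⟫_𝕜 = ∫ ξ, m ξ * (‖(𝓕 u : β → 𝕜) ξ‖ ^ 2 : ℝ) ∂ν := by
  rw [← 𝓕.inner_map_map, L2.inner_def]
  refine integral_congr_ae ?_
  filter_upwards [mem_multiplierGraph_iff.mp h] with ξ hξ
  rw [hξ, RCLike.inner_apply, mul_assoc, RCLike.mul_conj, RCLike.ofReal_pow]

theorem inner_nonneg_of_mem_multiplierGraph_ofReal {q : β → ℝ} (hq : 0 ≤ q)
    (h : (v, u) ∈ multiplierGraph 𝓕 fun ξ => (q ξ : 𝕜)) : 0 ≤ ⟪u, v⟫_𝕜 := by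
  rw [inner_eq_integral_of_mem_multiplierGraph h]
  simp_rw [← RCLike.ofReal_mul]
  rw [integral_ofReal, RCLike.ofReal_nonneg]
  exact integral_nonneg fun ξ => mul_nonneg (hq ξ) (sq_nonneg _)

theorem eq_zero_of_mem_multiplierGraph_sub_of_inner_nonpos {q : β → ℝ} (hq : 0 ≤ q) {z : 𝕜}
    (hz : ¬ 0 ≤ z) (h : (v, u) ∈ multiplierGraph 𝓕 fun ξ => (q ξ : 𝕜) - z)
    (huv : ⟪u, v⟫_𝕜 ≤ 0) : u = 0 := by
  have hshift := inner_nonneg_of_mem_multiplierGraph_ofReal hq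
    (by simpa using add_smul_mem_multiplierGraph_add_const h z)
  rw [inner_add_right, inner_smul_right, inner_self_eq_norm_sq_to_K] at hshift
  by_contra hu
  have hzu : 0 ≤ z * (‖u‖ : 𝕜) ^ 2 :=
    (neg_nonneg.mpr huv).trans (neg_le_iff_add_nonneg'.mpr hshift)
  have hu2 : 0 < (‖u‖ : 𝕜) ^ 2 := by exact_mod_cast pow_pos (norm_pos_iff.mpr hu) 2
  have hz0 := mul_nonneg hzu (RCLike.inv_pos.mpr hu2).le
  rw [mul_inv_cancel_right₀ hu2.ne'] at hz0
  exact hz hz0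

end MultiplierGraph

section FiniteRank

variable {𝕜 E ι : Type*} [RCLike 𝕜] [NormedAddCommGroup E] [InnerProductSpace 𝕜 E]
  [Fintype ι] [DecidableEq ι]

theorem inner_sum_smul_eq_neg_of_one_add_mulVec_eq_zero {φ ψ : ι → E} {x : ι → 𝕜}
    (hx : (1 + Matrix.of fun i j => ⟪φ i, ψ j⟫_𝕜) *ᵥ x = 0) (i : ι) :
    ⟪φ i, ∑ j, x j • ψ j⟫_𝕜 = -x i := by
  rw [Matrix.add_mulVec, Matrix.one_mulVec] at hx
  have := congrFun hx i
  simp only [Pi.add_apply, Matrix.mulVec, dotProduct, Matrix.of_apply, Pi.zero_apply] at this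
  simp only [inner_sum, inner_smul_right, mul_comm (x _)]
  linear_combination this

omit [DecidableEq ι] in
theorem inner_sum_smul_nonpos_of_inner_eq_neg {φ : ι → E} {u : E} {x : ι → 𝕜}
    (h : ∀ i, ⟪φ i, u⟫_𝕜 = -x i) : ⟪u, ∑ i, x i • φ i⟫_𝕜 ≤ 0 := by
  have h' : ∀ i, ⟪u, φ i⟫_𝕜 = -(starRingEnd 𝕜) (x i) := fun i => by
    rw [← inner_conj_symm, h, map_neg]
  simp only [inner_sum, inner_smul_right, h', mul_neg, RCLike.mul_conj, Finset.sum_neg_distrib,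
    neg_nonpos]
  exact Finset.sum_nonneg fun i _ => by exact_mod_cast sq_nonneg ‖x i‖

theorem inner_sub_sum_mulVec_smul_eq {φ ψ : ι → E} {G : Matrix ι ι 𝕜}
    (hG : (1 + Matrix.of fun i j => ⟪φ i, ψ j⟫_𝕜) * G = 1) (y : E) (k : ι) :
    ⟪φ k, y - ∑ i, (G *ᵥ fun j => ⟪φ j, y⟫_𝕜) i • ψ i⟫_𝕜 = (G *ᵥ fun j => ⟪φ j, y⟫_𝕜) k := by
  set c := G *ᵥ fun j => ⟪φ j, y⟫_𝕜
  have hc : (1 + Matrix.of fun i j => ⟪φ i, ψ j⟫_𝕜) *ᵥ c = fun j => ⟪φ j, y⟫_𝕜 := by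
    rw [Matrix.mulVec_mulVec, hG, Matrix.one_mulVec]
  rw [Matrix.add_mulVec, Matrix.one_mulVec] at hc
  have := congrFun hc k
  simp only [Pi.add_apply, Matrix.mulVec, dotProduct, Matrix.of_apply] at this
  rw [inner_sub_right, inner_sum]
  simp only [inner_smul_right, mul_comm (c _)]
  linear_combination -this

end FiniteRank

section ResolventGram

variable {𝕜 E β ι : Type*} [RCLike 𝕜] [NormedAddCommGroup E] [InnerProductSpace 𝕜 E]
  [MeasurableSpace β] {ν : Measure β} [Fintype ι] [DecidableEq ι]

theorem isUnit_one_add_inner_of_mem_multiplierGraph {𝓕 : E ≃ₗᵢ[𝕜] Lp 𝕜 2 ν} {q : β → ℝ}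
    (hq : 0 ≤ q) {z : 𝕜} (hz : ¬ 0 ≤ z) {φ ψ : ι → E}
    (hψ : ∀ j, (φ j, ψ j) ∈ multiplierGraph 𝓕 fun ξ => (q ξ : 𝕜) - z) :
    IsUnit (1 + Matrix.of fun i j => ⟪φ i, ψ j⟫_𝕜) := by
  rw [← Matrix.mulVec_injective_iff_isUnit, ← Matrix.coe_mulVecLin, injective_iff_map_eq_zero]
  intro x hx
  have hφψ := inner_sum_smul_eq_neg_of_one_add_mulVec_eq_zero hx
  have hu : ∑ j, x j • ψ j = 0 :=
    eq_zero_of_mem_multiplierGraph_sub_of_inner_nonpos hq hz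
      (sum_smul_mem_multiplierGraph Finset.univ x fun j _ => hψ j)
      (inner_sum_smul_nonpos_of_inner_eq_neg hφψ)
  funext i
  simpa [hu] using (hφψ i).symm

end ResolventGram

theorem aronszajn_krein_finite_rank (d : ℕ) (z : ℂ)
    (hz : ∀ r : ℝ, 0 ≤ r → z ≠ (r : ℂ))
    (𝓕 : Lp ℂ 2 (volume : Measure (EuclideanSpace ℝ (Fin d))) ≃ₗᵢ[ℂ]
         Lp ℂ 2 (volume : Measure (EuclideanSpace ℝ (Fin d))))
    (N : ℕ) (φ : Fin N → Lp ℂ 2 (volume : Measure (EuclideanSpace ℝ (Fin d))))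
    (rφ : Fin N → Lp ℂ 2 (volume : Measure (EuclideanSpace ℝ (Fin d))))
    (hrφ : ∀ j, (𝓕 (rφ j) : EuclideanSpace ℝ (Fin d) → ℂ) =ᵐ[volume]
      fun ξ => (((‖ξ‖ ^ 2 : ℝ) : ℂ) - z)⁻¹ * (𝓕 (φ j) : EuclideanSpace ℝ (Fin d) → ℂ) ξ) :
    ∃ G : Matrix (Fin N) (Fin N) ℂ,
      (Matrix.of fun i j => (if i = j then (1:ℂ) else 0) + (inner ℂ (φ i) (rφ j) : ℂ)) * G = 1 ∧
      G * (Matrix.of fun i j => (if i = j then (1:ℂ) else 0) + (inner ℂ (φ i) (rφ j) : ℂ)) = 1 ∧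
      ∀ f rf : Lp ℂ 2 (volume : Measure (EuclideanSpace ℝ (Fin d))),
        ((𝓕 rf : EuclideanSpace ℝ (Fin d) → ℂ) =ᵐ[volume]
          fun ξ => (((‖ξ‖ ^ 2 : ℝ) : ℂ) - z)⁻¹ * (𝓕 f : EuclideanSpace ℝ (Fin d) → ℂ) ξ) →
        ∀ B : Lp ℂ 2 (volume : Measure (EuclideanSpace ℝ (Fin d))),
          B = rf - ∑ i, ∑ j, (G i j * (inner ℂ (φ j) rf : ℂ)) • rφ i →
          ∃ hg : MemLp (fun ξ => (((‖ξ‖ ^ 2 : ℝ) : ℂ) - z) *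
              (𝓕 B : EuclideanSpace ℝ (Fin d) → ℂ) ξ) 2 volume,
            𝓕.symm (hg.toLp _) + ∑ j, (inner ℂ (φ j) B : ℂ) • φ j = f := by
  have hz' : ¬ 0 ≤ z := fun h =>
    hz z.re (Complex.nonneg_iff.mp h).1 (Complex.eq_re_of_ofReal_le (r := 0) (by simpa using h))
  have hs : ∀ ξ : EuclideanSpace ℝ (Fin d), ((‖ξ‖ ^ 2 : ℝ) : ℂ) - z ≠ 0 := fun ξ h =>
    hz _ (sq_nonneg _) (sub_eq_zero.mp h).symm
  have hφrφ j := swap_mem_multiplierGraph_of_mem_inv hs (hrφ j)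
  have hA : (Matrix.of fun i j => (if i = j then (1:ℂ) else 0) + ⟪φ i, rφ j⟫_ℂ) =
      1 + Matrix.of fun i j => ⟪φ i, rφ j⟫_ℂ := by
    ext i j
    simp [Matrix.one_apply]
  have hdet := (Matrix.isUnit_iff_isUnit_det _).mp
    (isUnit_one_add_inner_of_mem_multiplierGraph (fun ξ => sq_nonneg ‖ξ‖) hz' hφrφ)
  rw [hA]
  refine ⟨_, Matrix.mul_nonsing_inv _ hdet, Matrix.nonsing_inv_mul _ hdet, fun f rf hrf B hB => ?_⟩
  set c := (1 + Matrix.of fun i j => ⟪φ i, rφ j⟫_ℂ)⁻¹ *ᵥ fun j => ⟪φ j, rf⟫_ℂ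
  have hB' : B = rf - ∑ i, c i • rφ i := by
    simp only [hB, c, Matrix.mulVec, dotProduct, Finset.sum_smul]
  have hBf : (f - ∑ i, c i • φ i, B) ∈ multiplierGraph 𝓕 fun ξ => ((‖ξ‖ ^ 2 : ℝ) : ℂ) - z := by
    rw [hB', ← Prod.mk_sub_mk]
    exact Submodule.sub_mem _ (swap_mem_multiplierGraph_of_mem_inv hs hrf)
      (sum_smul_mem_multiplierGraph Finset.univ c fun i _ => hφrφ i)
  obtain ⟨hg, hgB⟩ := exists_memLp_symm_toLp_eq_of_mem_multiplierGraph hBf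
  have hPB : ∑ j, ⟪φ j, B⟫_ℂ • φ j = ∑ j, c j • φ j := by
    rw [hB']
    exact Finset.sum_congr rfl fun j _ =>
      congrArg (· • φ j) (inner_sub_sum_mulVec_smul_eq (Matrix.mul_nonsing_inv _ hdet) rf j)
  exact ⟨hg, by rw [hgB, hPB, sub_add_cancel]⟩
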